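/- arXiv:1911.07215 — 6 statements merged into one kernel-verified Lean document; each statement's English description precedes it below -/
import Mathlib

section
/- For every real σ with 1 < σ ≤ 2, we have -ζ'(σ)/ζ(σ) < 1/(σ - 1), where ζ is the Riemann zeta function. -/
/-!
With `D = ∑ log n / n^σ = -ζ'(σ)` and `Z = ∑ 1 / n^σ = ζ(σ)` the claim reads `(σ - 1) D < Z`.
Both series are compared with the integrals of their terms, using the explicit antiderivatives
`-t^(1-σ) (log t / (σ-1) + 1 / (σ-1)^2)` and `-t^(1-σ) / (σ-1)`. Since `log t / t^σ` decreases only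
from `t = e` on, the terms `n = 2, 3` of `D` are kept apart:
`D ≤ log 2 / 2^σ + log 3 / 3^σ + 3^(1-σ) (log 3 / (σ-1) + 1 / (σ-1)^2)` and `Z ≥ 1 + 2^(1-σ) / (σ-1)`.
For `a = σ - 1 ∈ (0, 1]` the resulting elementary inequality follows from
`3^(-a) (1 + a log 3 + (a log 3)^2 / 2) ≤ 3^(-a) e^(a log 3) = 1` and `2^(-a) ≥ 1 - a log 2`.
-/

open Complex
open Filter Topology Set

section TailBounds

variable {f G : ℝ → ℝ} {x : ℝ}

lemma AntitoneOn.sub_mem_Icc_of_hasDerivAt_neg (hf : AntitoneOn f (Ici x))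
    (hG : ∀ t ∈ Ici x, HasDerivAt G (-f t) t) {y : ℝ} (hy : x ≤ y) :
    G y - G (y + 1) ∈ Icc (f (y + 1)) (f y) := by
  have hG' : ∀ t ∈ Icc y (y + 1), HasDerivAt G (-f t) t := fun t ht => hG t (hy.trans ht.1)
  obtain ⟨c, hc, hslope⟩ := exists_hasDerivAt_eq_slope G (fun t => -f t) (lt_add_one y)
    (fun t ht => (hG' t ht).continuousAt.continuousWithinAt)
    (fun t ht => hG' t (Ioo_subset_Icc_self ht))
  have hfc : f c = G y - G (y + 1) := by
    rw [add_sub_cancel_left, div_one] at hslope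
    linarith
  have hcx : x ≤ c := hy.trans hc.1.le
  rw [← hfc]
  exact ⟨hf hcx (by simp only [mem_Ici]; linarith) hc.2.le, hf (mem_Ici.2 hy) hcx hc.1.le⟩

lemma AntitoneOn.sum_range_le_sub_of_hasDerivAt_neg (hf : AntitoneOn f (Ici x))
    (hG : ∀ t ∈ Ici x, HasDerivAt G (-f t) t) (M : ℕ) :
    ∑ n ∈ Finset.range M, f (x + n + 1) ≤ G x - G (x + M) := by
  have htel := Finset.sum_range_sub' (fun n : ℕ => G (x + n)) M
  simp only [Nat.cast_add_one, ← add_assoc, Nat.cast_zero, add_zero] at htel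
  rw [← htel]
  exact Finset.sum_le_sum fun n _ => (hf.sub_mem_Icc_of_hasDerivAt_neg hG (by simp)).1

lemma AntitoneOn.sub_le_sum_range_of_hasDerivAt_neg (hf : AntitoneOn f (Ici x))
    (hG : ∀ t ∈ Ici x, HasDerivAt G (-f t) t) (M : ℕ) :
    G x - G (x + M) ≤ ∑ n ∈ Finset.range M, f (x + n) := by
  have htel := Finset.sum_range_sub' (fun n : ℕ => G (x + n)) M
  simp only [Nat.cast_add_one, ← add_assoc, Nat.cast_zero, add_zero] at htel
  rw [← htel]
  exact Finset.sum_le_sum fun n _ => (hf.sub_mem_Icc_of_hasDerivAt_neg hG (by simp)).2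

lemma AntitoneOn.tsum_le_of_hasDerivAt_neg (hf : AntitoneOn f (Ici x))
    (hG : ∀ t ∈ Ici x, HasDerivAt G (-f t) t) (hf0 : ∀ t ∈ Ici x, 0 ≤ f t)
    (hG0 : ∀ t ∈ Ici x, 0 ≤ G t) :
    ∑' n : ℕ, f (x + n + 1) ≤ G x := by
  refine Real.tsum_le_of_sum_range_le (fun n => hf0 _ ?_) fun M => ?_
  · simp only [mem_Ici]
    linarith [(n.cast_nonneg : (0 : ℝ) ≤ n)]
  · linarith [hf.sum_range_le_sub_of_hasDerivAt_neg hG M, hG0 (x + M) (by simp)]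

lemma AntitoneOn.le_tsum_of_hasDerivAt_neg (hf : AntitoneOn f (Ici x))
    (hG : ∀ t ∈ Ici x, HasDerivAt G (-f t) t) (hlim : Tendsto G atTop (𝓝 0))
    (hs : Summable fun n : ℕ => f (x + n)) :
    G x ≤ ∑' n : ℕ, f (x + n) := by
  have hlim' : Tendsto (fun M : ℕ => G x - G (x + M)) atTop (𝓝 (G x - 0)) :=
    tendsto_const_nhds.sub <|
      hlim.comp <| tendsto_atTop_add_const_left _ x tendsto_natCast_atTop_atTop
  rw [sub_zero] at hlim'
  exact le_of_tendsto_of_tendsto' hlim' hs.hasSum.tendsto_sum_nat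
    (hf.sub_le_sum_range_of_hasDerivAt_neg hG)

end TailBounds

section Dirichlet

variable {σ : ℝ}

lemma LSeries.term_one_ofReal (hσ : σ ≠ 0) (n : ℕ) :
    LSeries.term 1 σ n = ((1 / (n : ℝ) ^ σ : ℝ) : ℂ) := by
  rcases eq_or_ne n 0 with rfl | hn
  · simp [Real.zero_rpow hσ]
  · rw [LSeries.term_of_ne_zero hn]
    push_cast [ofReal_cpow n.cast_nonneg]
    simp

lemma LSeries.term_logMul_one_ofReal (σ : ℝ) (n : ℕ) :
    LSeries.term (LSeries.logMul 1) σ n = ((Real.log n / (n : ℝ) ^ σ : ℝ) : ℂ) := by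
  rcases eq_or_ne n 0 with rfl | hn
  · simp
  · rw [LSeries.term_of_ne_zero hn]
    push_cast [ofReal_cpow n.cast_nonneg, natCast_log]
    simp [LSeries.logMul]

lemma LSeries.abscissaOfAbsConv_one_lt_ofReal (hσ : 1 < σ) :
    LSeries.abscissaOfAbsConv 1 < (σ : ℂ).re := by
  rw [LSeries.abscissaOfAbsConv_one, ofReal_re]
  exact_mod_cast hσ

lemma summable_log_div_rpow (hσ : 1 < σ) :
    Summable fun n : ℕ => Real.log n / (n : ℝ) ^ σ := by
  rw [← summable_ofReal]
  exact (LSeriesSummable_logMul_of_lt_re (LSeries.abscissaOfAbsConv_one_lt_ofReal hσ)).congr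
    (LSeries.term_logMul_one_ofReal σ)

lemma riemannZeta_ofReal_eq_tsum (hσ : 1 < σ) :
    riemannZeta σ = ((∑' n : ℕ, 1 / (n : ℝ) ^ σ : ℝ) : ℂ) := by
  rw [← LSeries_one_eq_riemannZeta (by simpa using hσ), LSeries, ofReal_tsum]
  simp only [LSeries.term_one_ofReal (by linarith : σ ≠ 0)]

lemma deriv_riemannZeta_ofReal_eq_neg_tsum (hσ : 1 < σ) :
    deriv riemannZeta σ = -((∑' n : ℕ, Real.log n / (n : ℝ) ^ σ : ℝ) : ℂ) := by
  have heq : LSeries 1 =ᶠ[𝓝 (σ : ℂ)] riemannZeta :=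
    Filter.eventuallyEq_of_mem ((isOpen_lt continuous_const continuous_re).mem_nhds
      (by simpa using hσ)) fun s hs => LSeries_one_eq_riemannZeta hs
  rw [← heq.deriv_eq, LSeries_deriv (LSeries.abscissaOfAbsConv_one_lt_ofReal hσ), LSeries,
    ofReal_tsum]
  simp only [LSeries.term_logMul_one_ofReal]

lemma hasDerivAt_rpow_one_sub_div (hσ : 1 < σ) {t : ℝ} (ht : 0 < t) :
    HasDerivAt (fun y : ℝ => y ^ (1 - σ) / (σ - 1)) (-(1 / t ^ σ)) t := by
  refine ((Real.hasDerivAt_rpow_const (p := 1 - σ) (Or.inl ht.ne')).div_const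
    (σ - 1)).congr_deriv ?_
  rw [show 1 - σ - 1 = -σ by ring, Real.rpow_neg ht.le]
  field_simp [show σ - 1 ≠ 0 by linarith]
  ring

lemma hasDerivAt_rpow_one_sub_mul_log (hσ : 1 < σ) {t : ℝ} (ht : 0 < t) :
    HasDerivAt (fun y : ℝ => y ^ (1 - σ) * (Real.log y / (σ - 1) + 1 / (σ - 1) ^ 2))
      (-(Real.log t / t ^ σ)) t := by
  have hrpow := Real.hasDerivAt_rpow_const (p := 1 - σ) (Or.inl ht.ne')
  have hlog := ((Real.hasDerivAt_log ht.ne').div_const (σ - 1)).add_const (1 / (σ - 1) ^ 2)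
  refine (hrpow.mul hlog).congr_deriv ?_
  rw [show 1 - σ - 1 = -σ by ring, Real.rpow_neg ht.le,
    show 1 - σ = 1 + -σ by ring, Real.rpow_add ht, Real.rpow_one, Real.rpow_neg ht.le]
  field_simp [show σ - 1 ≠ 0 by linarith]
  ring

lemma antitoneOn_log_div_rpow (hσ : 1 ≤ σ) :
    AntitoneOn (fun t : ℝ => Real.log t / t ^ σ) (Ici (Real.exp 1)) := by
  intro s hs t ht hst
  have hs0 : 0 < s := (Real.exp_pos 1).trans_le hs
  have ht0 : 0 < t := hs0.trans_le hst
  have hsplit {u : ℝ} (hu : 0 < u) : Real.log u / u ^ σ = Real.log u / u * u ^ (1 - σ) := by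
    rw [Real.rpow_sub hu, Real.rpow_one]
    field_simp
  simp only [hsplit hs0, hsplit ht0]
  have hlog : 0 ≤ Real.log s / s :=
    div_nonneg (Real.log_nonneg (by linarith [Real.add_one_le_exp 1, mem_Ici.1 hs])) hs0.le
  exact mul_le_mul (Real.log_div_self_antitoneOn hs ht hst)
    (Real.rpow_le_rpow_of_nonpos hs0 hst (by linarith)) (by positivity) hlog

lemma tsum_log_div_rpow_le (hσ : 1 < σ) :
    ∑' n : ℕ, Real.log n / (n : ℝ) ^ σ ≤ Real.log 2 / 2 ^ σ + Real.log 3 / 3 ^ σ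
      + 3 ^ (1 - σ) * (Real.log 3 / (σ - 1) + 1 / (σ - 1) ^ 2) := by
  have hanti := (antitoneOn_log_div_rpow hσ.le).mono (Ici_subset_Ici.2 Real.exp_one_lt_three.le)
  have htail := hanti.tsum_le_of_hasDerivAt_neg
    (fun t ht => hasDerivAt_rpow_one_sub_mul_log hσ (by linarith [mem_Ici.1 ht]))
    (fun t ht => div_nonneg (Real.log_nonneg (by linarith [mem_Ici.1 ht]))
      (Real.rpow_nonneg (by linarith [mem_Ici.1 ht]) σ))
    (fun t ht => mul_nonneg (Real.rpow_nonneg (by linarith [mem_Ici.1 ht]) _)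
      (add_nonneg (div_nonneg (Real.log_nonneg (by linarith [mem_Ici.1 ht])) (by linarith))
        (by positivity)))
  have hfin : ∑ n ∈ Finset.range 4, Real.log n / (n : ℝ) ^ σ
      = Real.log 2 / 2 ^ σ + Real.log 3 / 3 ^ σ := by
    simp [Finset.sum_range_succ]
  have hshift : ∑' n : ℕ, Real.log ↑(n + 4) / (↑(n + 4) : ℝ) ^ σ
      = ∑' n : ℕ, Real.log (3 + n + 1) / (3 + n + 1) ^ σ :=
    tsum_congr fun n => by rw [show (3 : ℝ) + n + 1 = ↑(n + 4) by push_cast; ring]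
  rw [← (summable_log_div_rpow hσ).sum_add_tsum_nat_add 4, hfin, hshift]
  linarith

lemma one_add_le_tsum_one_div_rpow (hσ : 1 < σ) :
    1 + 2 ^ (1 - σ) / (σ - 1) ≤ ∑' n : ℕ, 1 / (n : ℝ) ^ σ := by
  have hs := Real.summable_one_div_nat_rpow.2 hσ
  have hshift : (fun n : ℕ => 1 / (↑(n + 2) : ℝ) ^ σ) = fun n : ℕ => 1 / (2 + n : ℝ) ^ σ :=
    funext fun n => by rw [show (2 : ℝ) + n = ↑(n + 2) by push_cast; ring]
  have hanti : AntitoneOn (fun t : ℝ => 1 / t ^ σ) (Ici 2) := fun s hs t _ hst => by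
    have hs0 : 0 < s := by linarith [mem_Ici.1 hs]
    exact one_div_le_one_div_of_le (by positivity) (Real.rpow_le_rpow hs0.le hst (by linarith))
  have hlim : Tendsto (fun t : ℝ => t ^ (1 - σ) / (σ - 1)) atTop (𝓝 0) := by
    simpa [neg_sub] using (tendsto_rpow_neg_atTop (by linarith : 0 < σ - 1)).div_const (σ - 1)
  have htail := hanti.le_tsum_of_hasDerivAt_neg
    (fun t ht => hasDerivAt_rpow_one_sub_div hσ (by linarith [mem_Ici.1 ht])) hlim
    (hshift ▸ (summable_nat_add_iff 2).2 hs)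
  have hfin : ∑ n ∈ Finset.range 2, 1 / (n : ℝ) ^ σ = 1 := by
    simp [Finset.sum_range_succ, Real.zero_rpow (by linarith : σ ≠ 0)]
  rw [← hs.sum_add_tsum_nat_add 2, hfin, hshift]
  linarith

end Dirichlet

lemma three_rpow_neg_mul_lt_one {a : ℝ} (ha : 0 < a) :
    (3 : ℝ) ^ (-a) * (1 + a * Real.log 3 + a ^ 2 * Real.log 3 / 3) < 1 := by
  have hL : 1 < Real.log 3 := by linarith [Real.log_three_gt_d9]
  have hquad : a ^ 2 * Real.log 3 / 3 < (a * Real.log 3) ^ 2 / 2 := by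
    nlinarith [mul_pos (pow_pos ha 2) (sub_pos.2 hL)]
  calc (3 : ℝ) ^ (-a) * (1 + a * Real.log 3 + a ^ 2 * Real.log 3 / 3)
      < (3 : ℝ) ^ (-a) * (1 + a * Real.log 3 + (a * Real.log 3) ^ 2 / 2) := by gcongr
    _ ≤ (3 : ℝ) ^ (-a) * Real.exp (a * Real.log 3) := by
        gcongr
        exact Real.quadratic_le_exp_of_nonneg (by positivity)
    _ = 1 := by
        rw [Real.rpow_def_of_pos three_pos, ← Real.exp_add]
        simp [mul_comm]

lemma one_sub_le_two_rpow_neg_mul {a : ℝ} (ha0 : 0 ≤ a) (ha1 : a ≤ 1) :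
    1 - a ≤ (2 : ℝ) ^ (-a) * (1 - a ^ 2 * Real.log 2 / 2) := by
  have hL0 := Real.log_pos one_lt_two
  have hL1 := Real.log_two_lt_d9
  have hX : 1 - a * Real.log 2 ≤ (2 : ℝ) ^ (-a) := by
    rw [Real.rpow_def_of_pos two_pos]
    linarith [Real.add_one_le_exp (Real.log 2 * -a)]
  have hfac : 0 ≤ 1 - a ^ 2 * Real.log 2 / 2 := by nlinarith
  calc 1 - a ≤ (1 - a * Real.log 2) * (1 - a ^ 2 * Real.log 2 / 2) := by
        nlinarith [sq_nonneg (a * Real.log 2 - 1 / 2)]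
    _ ≤ (2 : ℝ) ^ (-a) * (1 - a ^ 2 * Real.log 2 / 2) := by gcongr

lemma sub_one_mul_log_div_rpow_bound_lt {σ : ℝ} (h1 : 1 < σ) (h2 : σ ≤ 2) :
    (σ - 1) * (Real.log 2 / 2 ^ σ + Real.log 3 / 3 ^ σ
        + 3 ^ (1 - σ) * (Real.log 3 / (σ - 1) + 1 / (σ - 1) ^ 2))
      < 1 + 2 ^ (1 - σ) / (σ - 1) := by
  set a := σ - 1
  have ha : 0 < a := by linarith
  have hY := three_rpow_neg_mul_lt_one ha
  have hX := one_sub_le_two_rpow_neg_mul ha.le (by linarith)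
  have hσ : σ = 1 + a := by ring
  have h2σ : (2 : ℝ) ^ σ = 2 / 2 ^ (-a) := by
    rw [hσ, Real.rpow_add two_pos, Real.rpow_neg zero_le_two, Real.rpow_one, div_inv_eq_mul]
  have h3σ : (3 : ℝ) ^ σ = 3 / 3 ^ (-a) := by
    rw [hσ, Real.rpow_add three_pos, Real.rpow_neg zero_le_three, Real.rpow_one, div_inv_eq_mul]
  rw [h2σ, h3σ, show 1 - σ = -a by ring]
  have hXpos : (0 : ℝ) < 2 ^ (-a) := by positivity
  have hYpos : (0 : ℝ) < 3 ^ (-a) := by positivity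
  rw [← sub_pos]
  field_simp
  linarith

/-- For every real `σ` with `1 < σ ≤ 2`, we have `-ζ'(σ)/ζ(σ) < 1/(σ - 1)`. -/
theorem neg_zeta_logDeriv_lt (σ : ℝ) (h1 : 1 < σ) (h2 : σ ≤ 2) :
    -(deriv riemannZeta σ / riemannZeta σ).re < 1 / (σ - 1) := by
  have hD := tsum_log_div_rpow_le h1
  have hZ := one_add_le_tsum_one_div_rpow h1
  have hσ : 0 < σ - 1 := by linarith
  have hZpos : 0 < ∑' n : ℕ, 1 / (n : ℝ) ^ σ := lt_of_lt_of_le (by positivity) hZ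
  rw [deriv_riemannZeta_ofReal_eq_neg_tsum h1, riemannZeta_ofReal_eq_tsum h1, ← ofReal_neg,
    ← ofReal_div, ofReal_re, neg_div, neg_neg, div_lt_div_iff₀ hZpos hσ, one_mul, mul_comm]
  exact (mul_le_mul_of_nonneg_left hD hσ.le).trans_lt
    ((sub_one_mul_log_div_rpow_bound_lt h1 h2).trans_le hZ)
end

section
/- Let s = σ + it be a complex number with 0 < σ < 1, and for ε ≥ 0 define Π_ε(s) := 1/(s+ε) + 1/(conj(s)+ε) + 1/(1-s+ε) + 1/(1-conj(s)+ε). Then with φ = (1+√5)/2, for all s with 0 < Re(s) < 1 we have Π_0(s) > Π_{φ-1}(s)/(2φ-1). -/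
/-!
Since `(s + ε) + (1 - s + ε) = 1 + 2ε` and `(s + ε)(1 - s + ε) = s(1 - s) + ε(1 + ε)`, pairing the
terms gives `Π_ε(s) = 2(1 + 2ε) Re (1 / (Z + ε(1 + ε)))` with `Z = s(1 - s)`. For `ε = φ - 1` we have
`ε(1 + ε) = 1` and `1 + 2ε = 2φ - 1`, so the claim becomes `Re (1 / (Z + 1)) < Re (1 / Z)`. Writing
`Z = X + iY`, this is `(X + 1) / ((X + 1)² + Y²) < X / (X² + Y²)`, i.e. `Y² < X(X + 1)`; and indeed
`X = σ(1 - σ) + t² > t² ≥ t²(1 - 2σ)² = Y²` when `0 < σ < 1`.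
-/

open Complex

noncomputable def pairingUp (ε : ℝ) (s : ℂ) : ℂ :=
  1 / (s + ε) + 1 / ((starRingEnd ℂ) s + ε) + 1 / (1 - s + ε) + 1 / (1 - (starRingEnd ℂ) s + ε)

lemma div_sq_add_lt_div_sq_add {m n c : ℝ} (hm : 0 < m) (hmn : m < n) (hc : 0 ≤ c)
    (hcmn : c < m * n) : n / (n ^ 2 + c) < m / (m ^ 2 + c) := by
  have hn : 0 < n := hm.trans hmn
  rw [div_lt_div_iff₀ (by positivity) (by positivity)]
  nlinarith [mul_lt_mul_of_pos_left hcmn (sub_pos.2 hmn)]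

lemma re_one_div_add_ofReal_lt {z : ℂ} {k : ℝ} (hz : 0 < z.re) (hk : 0 < k)
    (him : z.im ^ 2 < z.re * (z.re + k)) : (1 / (z + k)).re < (1 / z).re := by
  simpa only [one_div, inv_re, normSq_apply, add_re, add_im, ofReal_re, ofReal_im, add_zero, ← sq]
    using div_sq_add_lt_div_sq_add hz (lt_add_of_pos_right _ hk) (sq_nonneg z.im) him

lemma pairingUp_re_eq (ε : ℝ) {s : ℂ} (h₁ : s + ε ≠ 0) (h₂ : 1 - s + ε ≠ 0) :
    (pairingUp ε s).re = 2 * (1 + 2 * ε) * (1 / (s * (1 - s) + (ε * (1 + ε) : ℝ))).re := by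
  have hsum : 1 / (s + ε) + 1 / (1 - s + ε)
      = (1 + 2 * ε : ℝ) * (1 / (s * (1 - s) + (ε * (1 + ε) : ℝ))) := by
    rw [one_div_add_one_div h₁ h₂]
    push_cast
    ring
  have hconj : pairingUp ε s = (1 / (s + ε) + 1 / (1 - s + ε))
      + starRingEnd ℂ (1 / (s + ε) + 1 / (1 - s + ε)) := by
    simp only [pairingUp, map_add, map_div₀, map_one, map_sub, conj_ofReal]
    ring
  rw [hconj, add_re, conj_re, hsum, re_ofReal_mul]
  ring

/-- With `φ = (1+√5)/2`, for all `s` with `0 < Re s < 1` we have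
`Π_0(s) > Π_{φ-1}(s)/(2φ-1)`. -/
theorem pairingUp_zero_gt (s : ℂ) (h0 : 0 < s.re) (h1 : s.re < 1) :
    (pairingUp 0 s).re > (pairingUp ((1 + Real.sqrt 5) / 2 - 1) s).re /
      (2 * ((1 + Real.sqrt 5) / 2) - 1) := by
  set e : ℝ := (1 + Real.sqrt 5) / 2 - 1 with he
  have hsqrt5 : Real.sqrt 5 ^ 2 = 5 := Real.sq_sqrt (by norm_num)
  have he_pos : 0 < e := by nlinarith [Real.sqrt_nonneg 5]
  have he_golden : e * (1 + e) = 1 := by rw [he]; nlinarith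
  have h2φ : 2 * ((1 + Real.sqrt 5) / 2) - 1 = 1 + 2 * e := by ring
  have hre : ∀ ε : ℝ, 0 ≤ ε → (pairingUp ε s).re
      = 2 * (1 + 2 * ε) * (1 / (s * (1 - s) + (ε * (1 + ε) : ℝ))).re := fun ε hε =>
    pairingUp_re_eq ε (ne_zero_of_re_pos (by rw [add_re, ofReal_re]; linarith))
      (ne_zero_of_re_pos (by rw [add_re, sub_re, one_re, ofReal_re]; linarith))
  set Z := s * (1 - s) with hZ
  have hZre : Z.re = s.re * (1 - s.re) + s.im ^ 2 := by
    simp only [hZ, mul_re, sub_re, sub_im, one_re, one_im]; ring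
  have hZim : Z.im = s.im * (1 - 2 * s.re) := by
    simp only [hZ, mul_im, sub_re, sub_im, one_re, one_im]; ring
  have hZre_pos : 0 < Z.re := by rw [hZre]; nlinarith
  have hZim_sq : Z.im ^ 2 < Z.re := by
    rw [hZre, hZim]
    nlinarith [sq_nonneg s.im, mul_pos h0 (sub_pos.2 h1)]
  have key := re_one_div_add_ofReal_lt hZre_pos one_pos (by nlinarith)
  rw [h2φ, hre 0 le_rfl, hre e he_pos.le, he_golden]
  field_simp
  simpa using key
end

section
/- Let M ≥ 2 and 0 < ε < 1 be real numbers, and let s = σ + it with 0 < σ < 1. Suppose |t| ≥ 1 (region R₁), or 1/M ≤ σ ≤ 1 - 1/M with |t| < 1 (region R₂), or 0 ≤ σ(1-σ) ≤ (1/M)(1 - 1/M) with M^{-1/2} ≤ |t| < 1 (region R₃). Then |Π_0(s) - Π_ε(s)| < 5Mε·Π_ε(s), where Π_ε(s) := 1/(s+ε) + 1/(conj(s)+ε) + 1/(1-s+ε) + 1/(1-conj(s)+ε). -/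
open Complex

/-- The real part of `Π_ε(s)` in closed form. -/
lemma pairingUp_re (ε : ℝ) (s : ℂ) :
    (pairingUp ε s).re =
      2*(s.re+ε)/((s.re+ε)^2+s.im^2) + 2*(1-s.re+ε)/((1-s.re+ε)^2+s.im^2) := by
  simp only [pairingUp, one_div, Complex.add_re, Complex.inv_re, Complex.normSq_apply,
    Complex.add_im, Complex.sub_re, Complex.sub_im, Complex.one_re,
    Complex.one_im, Complex.ofReal_re, Complex.ofReal_im, Complex.conj_re, Complex.conj_im]
  ring

/-- The elementary perturbation estimate for one pair of terms. -/
lemma diff_bound (ε x t : ℝ) (hε : 0 < ε) (hx : 0 < x) :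
    |2*x/(x^2+t^2) - 2*(x+ε)/((x+ε)^2+t^2)|
      ≤ 2*ε*(x*(x+ε)+t^2)/((x^2+t^2)*((x+ε)^2+t^2)) := by
  have hxε : 0 < x + ε := by linarith
  have hA : 0 < x^2+t^2 := add_pos_of_pos_of_nonneg (pow_pos hx 2) (sq_nonneg t)
  have hA' : 0 < (x+ε)^2+t^2 := add_pos_of_pos_of_nonneg (pow_pos hxε 2) (sq_nonneg t)
  have hid : 2*x/(x^2+t^2) - 2*(x+ε)/((x+ε)^2+t^2)
      = 2*ε*(x*(x+ε)-t^2)/((x^2+t^2)*((x+ε)^2+t^2)) := by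
    field_simp
    ring
  rw [hid, abs_div, abs_of_pos (mul_pos hA hA')]
  have h1 : |2*ε*(x*(x+ε)-t^2)| ≤ 2*ε*(x*(x+ε)+t^2) := by
    rw [abs_mul, abs_of_pos (by linarith : (0:ℝ) < 2*ε)]
    have h2 : |x*(x+ε)-t^2| ≤ x*(x+ε)+t^2 := by
      rw [abs_le]
      constructor <;> nlinarith [mul_nonneg hx.le hxε.le, sq_nonneg t]
    nlinarith
  exact div_le_div_of_nonneg_right h1 (mul_pos hA hA').le

/-- Region `R₁` bound for a single pair. -/
lemma r1_bound' (ε x t : ℝ) (hε0 : 0 < ε) (hx : 0 < x) (ht : 1 ≤ t^2) :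
    2*ε*(x*(x+ε)+t^2)/((x^2+t^2)*((x+ε)^2+t^2)) ≤ 2*(ε/t^2) := by
  have hxε : 0 < x + ε := by linarith
  have hA : 0 < x^2+t^2 := add_pos_of_pos_of_nonneg (pow_pos hx 2) (sq_nonneg t)
  have hA' : 0 < (x+ε)^2+t^2 := add_pos_of_pos_of_nonneg (pow_pos hxε 2) (sq_nonneg t)
  have ht0 : 0 < t^2 := by linarith
  rw [show 2*(ε/t^2) = 2*ε/t^2 by ring, div_le_div_iff₀ (mul_pos hA hA') ht0]
  nlinarith [mul_nonneg (mul_nonneg hε0.le (mul_nonneg hε0.le hxε.le)) (sq_nonneg t),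
    mul_nonneg hε0.le (mul_nonneg (sq_nonneg x) (sq_nonneg t)),
    mul_nonneg hε0.le (mul_nonneg (sq_nonneg x) (sq_nonneg (x+ε)))]

/-- Region `R₁` lower bound for the right-hand side. -/
lemma r1_rhs' (M ε x t : ℝ) (hM : 2 ≤ M) (hε0 : 0 < ε) (hε1 : ε < 1) (hx0 : 0 < x)
    (hhalf : x ≤ 1/2) (ht : 1 ≤ t^2) :
    4*(ε/t^2) < 5*M*ε*(2*((1-x)+ε)/(((1-x)+ε)^2+t^2)) := by
  have hu : 0 < (1-x)+ε := by linarith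
  have hB' : 0 < ((1-x)+ε)^2+t^2 := add_pos_of_pos_of_nonneg (pow_pos hu 2) (sq_nonneg t)
  have ht0 : 0 < t^2 := by linarith
  have hrw : 5*M*ε*(2*((1-x)+ε)/(((1-x)+ε)^2+t^2)) = 10*M*ε*((1-x)+ε)/(((1-x)+ε)^2+t^2) := by
    ring
  rw [show 4*(ε/t^2) = 4*ε/t^2 by ring, hrw, div_lt_div_iff₀ ht0 hB']
  have hu2 : (1-x)+ε < 2 := by linarith
  have huh : 1/2 < (1-x)+ε := by linarith
  nlinarith [mul_pos hu ht0, mul_pos hε0 (mul_pos hu ht0),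
    mul_nonneg (show (0:ℝ) ≤ M - 2 by linarith) (mul_nonneg hε0.le (mul_nonneg hu.le ht0.le)),
    mul_pos hε0 (mul_pos hu (show (0:ℝ) < 2*t^2 - ((1-x)+ε) by nlinarith)),
    mul_nonneg hε0.le (mul_nonneg ht0.le (show (0:ℝ) ≤ 2*((1-x)+ε) - 1 by linarith))]

/-- Region `R₂` bound for a single pair. -/
lemma r2_bound (M ε x t : ℝ) (hε0 : 0 < ε) (hx : 0 < x) (hM0 : 0 < M) (hMx : 1 ≤ M*x) :
    2*ε*(x*(x+ε)+t^2)/((x^2+t^2)*((x+ε)^2+t^2)) ≤ 2*M*ε*(2*(x+ε)/((x+ε)^2+t^2)) := by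
  have hxε : 0 < x + ε := by linarith
  have hA : 0 < x^2+t^2 := add_pos_of_pos_of_nonneg (pow_pos hx 2) (sq_nonneg t)
  have hA' : 0 < (x+ε)^2+t^2 := add_pos_of_pos_of_nonneg (pow_pos hxε 2) (sq_nonneg t)
  have hrw : 2*M*ε*(2*(x+ε)/((x+ε)^2+t^2)) = 4*M*ε*(x+ε)/((x+ε)^2+t^2) := by ring
  rw [hrw, div_le_div_iff₀ (mul_pos hA hA') hA']
  have hP : x*(x+ε)+t^2 ≤ 2*M*(x+ε)*(x^2+t^2) := by
    nlinarith [mul_nonneg (mul_nonneg hx.le hxε.le) (show (0:ℝ) ≤ 2*(M*x) - 1 by linarith),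
      mul_nonneg (sq_nonneg t) (show (0:ℝ) ≤ 2*(M*x) - 1 by linarith),
      mul_nonneg (mul_nonneg hM0.le (sq_nonneg t)) hε0.le]
  nlinarith [mul_le_mul_of_nonneg_left (mul_le_mul_of_nonneg_right hP hA'.le) hε0.le,
    mul_nonneg (mul_nonneg (mul_nonneg hM0.le hε0.le) hxε.le)
      (mul_nonneg hA.le hA'.le)]

/-- Region `R₃` bound, for the coordinate away from the boundary. -/
lemma big_side (ε x t : ℝ) (hε0 : 0 < ε) (hx : 0 < x) (hhalf : 1/2 ≤ x) :
    2*ε*(x*(x+ε)+t^2)/((x^2+t^2)*((x+ε)^2+t^2)) ≤ 4*ε*(2*(x+ε)/((x+ε)^2+t^2)) := by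
  have hxε : 0 < x + ε := by linarith
  have hA : 0 < x^2+t^2 := add_pos_of_pos_of_nonneg (pow_pos hx 2) (sq_nonneg t)
  have hA' : 0 < (x+ε)^2+t^2 := add_pos_of_pos_of_nonneg (pow_pos hxε 2) (sq_nonneg t)
  have hrw : 4*ε*(2*(x+ε)/((x+ε)^2+t^2)) = 8*ε*(x+ε)/((x+ε)^2+t^2) := by ring
  rw [hrw, div_le_div_iff₀ (mul_pos hA hA') hA']
  have hP : x*(x+ε)+t^2 ≤ 4*(x+ε)*(x^2+t^2) := by
    nlinarith [mul_nonneg (mul_nonneg hx.le hxε.le) (show (0:ℝ) ≤ 2*x - 1 by linarith),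
      mul_nonneg (sq_nonneg t) (show (0:ℝ) ≤ 2*(x+ε) - 1 by linarith),
      mul_nonneg (mul_nonneg hx.le hxε.le) hx.le, mul_nonneg hxε.le (sq_nonneg t)]
  nlinarith [mul_le_mul_of_nonneg_left (mul_le_mul_of_nonneg_right hP hA'.le) hε0.le]

/-- Region `R₃` bound, for the coordinate near the boundary. -/
lemma small_side (M ε x t : ℝ) (hM : 2 ≤ M) (hε0 : 0 < ε) (hε1 : ε < 1)
    (hx : 0 < x) (hxM : x ≤ 1/M) (hMt : 1 ≤ M*t^2) (ht1 : t^2 < 1) :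
    2*ε*(x*(x+ε)+t^2)/((x^2+t^2)*((x+ε)^2+t^2))
      < (2*M+2)*ε*(2*((1-x)+ε)/(((1-x)+ε)^2+t^2)) := by
  have hM0 : (0:ℝ) < M := by linarith
  have hx2 : x ≤ 1/2 := by
    have := (le_div_iff₀ hM0).mp hxM
    nlinarith
  have hxε : 0 < x + ε := by linarith
  have hu : 0 < (1-x)+ε := by linarith
  have huh : 1/2 < (1-x)+ε := by linarith
  have hu2 : (1-x)+ε < 2 := by linarith
  have hA : 0 < x^2+t^2 := add_pos_of_pos_of_nonneg (pow_pos hx 2) (sq_nonneg t)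
  have hA' : 0 < (x+ε)^2+t^2 := add_pos_of_pos_of_nonneg (pow_pos hxε 2) (sq_nonneg t)
  have hB' : 0 < ((1-x)+ε)^2+t^2 := add_pos_of_pos_of_nonneg (pow_pos hu 2) (sq_nonneg t)
  have ht0 : 0 < t^2 := by nlinarith
  have hrw : (2*M+2)*ε*(2*((1-x)+ε)/(((1-x)+ε)^2+t^2))
      = (4*M+4)*ε*((1-x)+ε)/(((1-x)+ε)^2+t^2) := by ring
  rw [hrw, div_lt_div_iff₀ (mul_pos hA hA') hB']
  have hP0 : 0 < x*(x+ε)+t^2 := by positivity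
  have hPt : t^2 ≤ x*(x+ε)+t^2 := by nlinarith [mul_nonneg hx.le hxε.le]
  have hPsq : (x*(x+ε)+t^2)^2 ≤ (x^2+t^2)*((x+ε)^2+t^2) := by nlinarith [sq_nonneg (ε*t)]
  have hPtA : (x*(x+ε)+t^2)*t^2 ≤ (x^2+t^2)*((x+ε)^2+t^2) := by
    nlinarith [mul_le_mul_of_nonneg_left hPt hP0.le]
  have hB'lt : ((1-x)+ε)^2+t^2 < (2*M+2)*((1-x)+ε)*t^2 := by
    nlinarith [mul_nonneg hu.le (show (0:ℝ) ≤ M*t^2 - 1 by linarith),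
      mul_pos hu (show (0:ℝ) < 2 - ((1-x)+ε) by linarith),
      mul_nonneg ht0.le (show (0:ℝ) ≤ 2*((1-x)+ε) - 1 by linarith)]
  have h1 : (x*(x+ε)+t^2) * (((1-x)+ε)^2+t^2)
      < (x*(x+ε)+t^2) * ((2*M+2)*((1-x)+ε)*t^2) :=
    mul_lt_mul_of_pos_left hB'lt hP0
  have h2 : (2*M+2)*((1-x)+ε)*((x*(x+ε)+t^2)*t^2)
      ≤ (2*M+2)*((1-x)+ε)*((x^2+t^2)*((x+ε)^2+t^2)) :=
    mul_le_mul_of_nonneg_left hPtA (by positivity)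
  have h1' := mul_lt_mul_of_pos_left h1 (show (0:ℝ) < 2*ε by linarith)
  have h2' := mul_le_mul_of_nonneg_left h2 (show (0:ℝ) ≤ 2*ε by linarith)
  linarith [h1', h2']

/-- The key real inequality. -/
lemma key' (M ε σ t : ℝ) (hM : 2 ≤ M) (hε0 : 0 < ε) (hε1 : ε < 1)
    (h0 : 0 < σ) (h1 : σ < 1)
    (hcase : 1 ≤ t^2 ∨ (1/M ≤ σ ∧ σ ≤ 1 - 1/M) ∨
      ((σ ≤ 1/M ∨ 1 - 1/M ≤ σ) ∧ 1/M ≤ t^2 ∧ t^2 < 1)) :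
    |2*σ/(σ^2+t^2) + 2*(1-σ)/((1-σ)^2+t^2)
      - (2*(σ+ε)/((σ+ε)^2+t^2) + 2*(1-σ+ε)/((1-σ+ε)^2+t^2))|
      < 5*M*ε*(2*(σ+ε)/((σ+ε)^2+t^2) + 2*(1-σ+ε)/((1-σ+ε)^2+t^2)) := by
  have hM0 : (0:ℝ) < M := by linarith
  have hv : 0 < 1 - σ := by linarith
  have hu1 : 0 < σ + ε := by linarith
  have hu2 : 0 < 1 - σ + ε := by linarith
  have hA' : 0 < (σ+ε)^2+t^2 := add_pos_of_pos_of_nonneg (pow_pos hu1 2) (sq_nonneg t)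
  have hB' : 0 < (1-σ+ε)^2+t^2 := add_pos_of_pos_of_nonneg (pow_pos hu2 2) (sq_nonneg t)
  have d1 := diff_bound ε σ t hε0 h0
  have d2 := diff_bound ε (1-σ) t hε0 hv
  have habs : |2*σ/(σ^2+t^2) + 2*(1-σ)/((1-σ)^2+t^2)
      - (2*(σ+ε)/((σ+ε)^2+t^2) + 2*(1-σ+ε)/((1-σ+ε)^2+t^2))|
      ≤ 2*ε*(σ*(σ+ε)+t^2)/((σ^2+t^2)*((σ+ε)^2+t^2))
        + 2*ε*((1-σ)*((1-σ)+ε)+t^2)/(((1-σ)^2+t^2)*(((1-σ)+ε)^2+t^2)) := by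
    have harg : 2*σ/(σ^2+t^2) + 2*(1-σ)/((1-σ)^2+t^2)
        - (2*(σ+ε)/((σ+ε)^2+t^2) + 2*(1-σ+ε)/((1-σ+ε)^2+t^2))
        = (2*σ/(σ^2+t^2) - 2*(σ+ε)/((σ+ε)^2+t^2))
          + (2*(1-σ)/((1-σ)^2+t^2) - 2*((1-σ)+ε)/(((1-σ)+ε)^2+t^2)) := by
      ring
    rw [harg]
    exact (abs_add_le _ _).trans (add_le_add d1 d2)
  refine lt_of_le_of_lt habs ?_
  set X1 := 2*ε*(σ*(σ+ε)+t^2)/((σ^2+t^2)*((σ+ε)^2+t^2)) with hX1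
  set X2 := 2*ε*((1-σ)*((1-σ)+ε)+t^2)/(((1-σ)^2+t^2)*(((1-σ)+ε)^2+t^2)) with hX2
  set G1 := 2*(σ+ε)/((σ+ε)^2+t^2) with hG1d
  set G2 := 2*(1-σ+ε)/((1-σ+ε)^2+t^2) with hG2d
  have hG1 : 0 < G1 := by rw [hG1d]; positivity
  have hG2 : 0 < G2 := by rw [hG2d]; positivity
  have hsplit : 5*M*ε*(G1 + G2) = 5*M*ε*G1 + 5*M*ε*G2 := by ring
  rw [hsplit]
  have h1M : (1:ℝ)/M ≤ 1/2 := by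
    rw [div_le_div_iff₀ hM0 (by norm_num : (0:ℝ) < 2)]; linarith
  have eq1 : 2*((1-(1-σ))+ε)/(((1-(1-σ))+ε)^2+t^2) = G1 := by rw [hG1d]; ring
  rcases hcase with ht | ⟨hl, hr⟩ | ⟨hd, ht2, ht1⟩
  · -- R1
    have b1 := r1_bound' ε σ t hε0 h0 ht
    have b2 := r1_bound' ε (1-σ) t hε0 hv ht
    rw [← hX1] at b1
    rw [← hX2] at b2
    rcases le_total σ (1/2) with hh | hh
    · have c := r1_rhs' M ε σ t hM hε0 hε1 h0 hh ht
      rw [← hG2d] at c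
      have hp : 0 < 5*M*ε*G1 := by positivity
      linarith
    · have c := r1_rhs' M ε (1-σ) t hM hε0 hε1 hv (by linarith) ht
      rw [eq1] at c
      have hp : 0 < 5*M*ε*G2 := by positivity
      linarith
  · -- R2
    have hMx1 : 1 ≤ M*σ := by rw [div_le_iff₀ hM0] at hl; linarith
    have hMx2 : 1 ≤ M*(1-σ) := by
      have h' : 1/M ≤ 1-σ := by linarith
      rw [div_le_iff₀ hM0] at h'; linarith
    have b1 := r2_bound M ε σ t hε0 h0 hM0 hMx1
    have b2 := r2_bound M ε (1-σ) t hε0 hv hM0 hMx2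
    rw [← hG2d] at b2
    rw [← hX1, ← hG1d] at b1
    rw [← hX2] at b2
    have hm1 : 0 < M*ε*G1 := by positivity
    have hm2 : 0 < M*ε*G2 := by positivity
    linarith
  · -- R3
    have hMt : 1 ≤ M*t^2 := by rw [div_le_iff₀ hM0] at ht2; linarith
    rcases hd with hs | hs
    · have b1 := small_side M ε σ t hM hε0 hε1 h0 hs hMt ht1
      have hbig : 1/2 ≤ 1-σ := by linarith
      have b2 := big_side ε (1-σ) t hε0 hv hbig
      rw [← hG2d] at b1 b2
      rw [← hX1] at b1
      rw [← hX2] at b2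
      have hh : 0 ≤ (3*M-6)*(ε*G2) :=
        mul_nonneg (by linarith) (mul_nonneg hε0.le hG2.le)
      have hp : 0 < 5*M*ε*G1 := by positivity
      linarith
    · have hsm : 1-σ ≤ 1/M := by linarith
      have b1 := small_side M ε (1-σ) t hM hε0 hε1 hv hsm hMt ht1
      have hbig : 1/2 ≤ σ := by linarith
      have b2 := big_side ε σ t hε0 h0 hbig
      rw [eq1] at b1
      rw [← hX2] at b1
      rw [← hX1, ← hG1d] at b2
      have hh : 0 ≤ (3*M-6)*(ε*G1) :=
        mul_nonneg (by linarith) (mul_nonneg hε0.le hG1.le)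
      have hp : 0 < 5*M*ε*G2 := by positivity
      linarith

/-- For `M ≥ 2`, `0 < ε < 1` and `s` in region `R₁ ∪ R₂ ∪ R₃` of the critical strip,
`|Π_0(s) - Π_ε(s)| < 5Mε Π_ε(s)`. -/
theorem pairingUp_perturb (M ε : ℝ) (hM : 2 ≤ M) (hε0 : 0 < ε) (hε1 : ε < 1)
    (s : ℂ) (h0 : 0 < s.re) (h1 : s.re < 1)
    (hreg : 1 ≤ |s.im| ∨
      (1 / M ≤ s.re ∧ s.re ≤ 1 - 1 / M ∧ |s.im| < 1) ∨
      (0 ≤ s.re * (1 - s.re) ∧ s.re * (1 - s.re) ≤ (1 / M) * (1 - 1 / M) ∧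
        M ^ (-(1 : ℝ) / 2) ≤ |s.im| ∧ |s.im| < 1)) :
    |(pairingUp 0 s).re - (pairingUp ε s).re| < 5 * M * ε * (pairingUp ε s).re := by
  have hM0 : (0:ℝ) < M := by linarith
  have hcase : 1 ≤ s.im^2 ∨ (1/M ≤ s.re ∧ s.re ≤ 1 - 1/M) ∨
      ((s.re ≤ 1/M ∨ 1 - 1/M ≤ s.re) ∧ 1/M ≤ s.im^2 ∧ s.im^2 < 1) := by
    rcases hreg with h | ⟨ha, hb, _⟩ | ⟨_, hb, hc, hd⟩
    · left
      nlinarith [_root_.sq_abs s.im, abs_nonneg s.im]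
    · exact Or.inr (Or.inl ⟨ha, hb⟩)
    · right; right
      refine ⟨?_, ?_, ?_⟩
      · rcases le_or_gt s.re (1/M) with h | h
        · exact Or.inl h
        · right
          nlinarith
      · have hr : (M ^ (-(1:ℝ)/2))^2 = 1/M := by
          rw [← Real.rpow_natCast (M ^ (-(1:ℝ)/2)) 2, ← Real.rpow_mul hM0.le]
          norm_num
          exact Real.rpow_neg_one M
        have hnn : 0 ≤ M ^ (-(1:ℝ)/2) := Real.rpow_nonneg hM0.le _
        nlinarith [_root_.sq_abs s.im, mul_self_le_mul_self hnn hc]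
      · nlinarith [_root_.sq_abs s.im, abs_nonneg s.im]
  have h := key' M ε s.re s.im hM hε0 hε1 h0 h1 hcase
  rw [pairingUp_re 0 s, pairingUp_re ε s]
  simp only [add_zero]
  exact h
end

section
/- For s = σ + it with 0 < σ < 1 and |t| ≥ 1, and for 0 < ε < 1, we have Π_ε(s)/(1+2ε) < Π_0(s) < (1 + ε²/(1+ε))·Π_ε(s), where Π_ε(s) := 1/(s+ε) + 1/(conj(s)+ε) + 1/(1-s+ε) + 1/(1-conj(s)+ε). -/
open Complex

lemma pairingUp_re_aux (s : ℂ) (ε : ℝ) :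
    (pairingUp ε s).re
      = 2*(s.re+ε)/((s.re+ε)^2+s.im^2) + 2*(1-s.re+ε)/((1-s.re+ε)^2+s.im^2) := by
  simp [pairingUp, Complex.add_re, one_div, Complex.inv_re, Complex.normSq_apply,
    Complex.add_im, Complex.sub_re, Complex.sub_im, Complex.ofReal_re, Complex.ofReal_im]
  ring

lemma pairingUp_aux1 (y0 c ε : ℝ) (hy : 1 < y0) (hc0 : 0 ≤ c) (hc : c < y0)
    (hε0 : 0 < ε) :
    2 * (y0 + ε + ε^2) * (y0^2 + c) < 2 * y0 * ((y0 + ε + ε^2)^2 + c) := by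
  have ha : (0:ℝ) < (y0 + ε + ε^2) - y0 := by nlinarith
  have hb : (0:ℝ) < y0 * (y0 + ε + ε^2) - c := by nlinarith
  nlinarith [mul_pos ha hb]

lemma pairingUp_aux2 (y0 c ε : ℝ) (hy : 1 < y0) (hc0 : 0 ≤ c) (hε0 : 0 < ε) (hε1 : ε < 1) :
    2 * y0 * ((1+ε) * ((y0 + ε + ε^2)^2 + c))
      < (1+ε+ε^2)*(1+2*ε) * (y0 + ε + ε^2) * 2 * (y0^2 + c) := by
  have hy0pos : (0:ℝ) < y0 := by linarith
  have hB : 0 < (2+3*ε+2*ε^2)*(y0+1) + (1+ε)*(2*ε^3+3*ε^2+ε-1) := by nlinarith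
  have hh1 : 0 < ε*y0*((y0-1)*((2+3*ε+2*ε^2)*(y0+1) + (1+ε)*(2*ε^3+3*ε^2+ε-1))
      + (1+2*ε+3*ε^2+2*ε^3+ε^4)) := by
    apply mul_pos (mul_pos hε0 hy0pos)
    nlinarith [mul_pos (show (0:ℝ) < y0-1 by linarith) hB]
  have hh2 : 0 ≤ c*(ε*(2+3*ε+2*ε^2)*y0 + (1+3*ε+3*ε^2+2*ε^3)*(ε*(1+ε))) := by
    apply mul_nonneg hc0; positivity
  nlinarith [hh1, hh2]

set_option maxHeartbeats 1000000 in
/-- For `0 < Re s < 1`, `|Im s| ≥ 1` and `0 < ε < 1`,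
`Π_ε(s)/(1+2ε) < Π_0(s) < (1 + ε²/(1+ε)) Π_ε(s)`. -/
theorem pairingUp_R1_bounds (s : ℂ) (ε : ℝ) (h0 : 0 < s.re) (h1 : s.re < 1)
    (ht : 1 ≤ |s.im|) (hε0 : 0 < ε) (hε1 : ε < 1) :
    (pairingUp ε s).re / (1 + 2 * ε) < (pairingUp 0 s).re ∧
      (pairingUp 0 s).re < (1 + ε ^ 2 / (1 + ε)) * (pairingUp ε s).re := by
  have hT : 1 ≤ s.im^2 := by nlinarith [_root_.sq_abs s.im, abs_nonneg s.im]
  set σ := s.re with hσ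
  set T := s.im^2 with hTdef
  set y0 : ℝ := σ*(1-σ) + T with hy0def
  set c : ℝ := T*(1-2*σ)^2 with hcdef
  set y1 : ℝ := y0 + ε + ε^2 with hy1def
  have hA0 : 0 < σ*(1-σ) := mul_pos h0 (by linarith)
  have hy : 1 < y0 := by rw [hy0def]; nlinarith
  have hy0pos : 0 < y0 := by linarith
  have hc0 : 0 ≤ c := by rw [hcdef]; positivity
  have hc : c < y0 := by
    rw [hcdef, hy0def]
    nlinarith [(by nlinarith : (1-2*σ)^2 < 1), (by linarith : (0:ℝ) < T)]
  have hT0 : (0:ℝ) < T := by linarith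
  have hq1 : (0:ℝ) < (σ+ε)^2 + T := by positivity
  have hq2 : (0:ℝ) < (1-σ+ε)^2 + T := by positivity
  have hq3 : (0:ℝ) < σ^2 + T := by positivity
  have hq4 : (0:ℝ) < (1-σ)^2 + T := by positivity
  clear_value σ T y0 c y1
  have hy1pos : 0 < y1 := by rw [hy1def]; nlinarith
  have hd0 : (0:ℝ) < y0^2 + c := by nlinarith
  have hd1 : (0:ℝ) < y1^2 + c := by nlinarith
  have hre_ε : (pairingUp ε s).re = 2*(1+2*ε)*y1/(y1^2+c) := by
    rw [pairingUp_re_aux, ← hσ, ← hTdef, hy1def, hy0def, hcdef]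
    rw [div_add_div _ _ (ne_of_gt hq1) (ne_of_gt hq2),
      div_eq_div_iff (by positivity) (by positivity)]
    ring
  have hre_0 : (pairingUp 0 s).re = 2*y0/(y0^2+c) := by
    rw [pairingUp_re_aux, ← hσ, ← hTdef, hy0def, hcdef]
    push_cast
    rw [add_zero, add_zero, div_add_div _ _ (ne_of_gt hq3) (ne_of_gt hq4),
      div_eq_div_iff (by positivity) (by positivity)]
    ring
  have h12 : (0:ℝ) < 1 + 2*ε := by linarith
  clear ht h0 h1 hσ hTdef hy0def hcdef hT hA0 hT0 hq1 hq2 hq3 hq4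
  constructor
  · rw [hre_ε, hre_0]
    have heq : 2*(1+2*ε)*y1/(y1^2+c) / (1+2*ε) = 2*y1/(y1^2+c) := by
      field_simp
    rw [heq, div_lt_div_iff₀ hd1 hd0]
    have := pairingUp_aux1 y0 c ε hy hc0 hc hε0
    rw [hy1def]
    linarith [this]
  · rw [hre_ε, hre_0]
    have hεp : (0:ℝ) < 1 + ε := by linarith
    have hrw : (1 + ε^2/(1+ε)) * (2*(1+2*ε)*y1/(y1^2+c))
        = ((1+ε+ε^2)*(1+2*ε)*y1*2) / ((1+ε)*(y1^2+c)) := by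
      field_simp
    rw [hrw, div_lt_div_iff₀ hd0 (by positivity)]
    have := pairingUp_aux2 y0 c ε hy hc0 hε0 hε1
    rw [hy1def]
    nlinarith [this]
end

section
/- For every real y ≥ 4 and every τ = x + iy in the upper half-plane, |j(τ)|·e^{-2πy} ≤ 1 + (1 + 1/(πy))·e^{-πy}, where j is the modular j-invariant. -/
/-!
With `r = e^{-πy}` we have `|q| = r²`, and for `y ≥ 4` the growth `c(n) < e^{4π√n} ≤ r^{-n}` is
beaten by `|q|ⁿ = r^{2n}`, so every term of the series satisfies `|c(n) qⁿ| ≤ 744 rⁿ`. Hence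
`|j(τ)| r² ≤ 1 + 744 r²/(1 - r)`, and this is at most `1 + r` because `745 r ≤ 745 e^{-4π} ≤ 1`.
-/

open Complex Real

theorem norm_cexp_two_pi_I_mul (τ : ℂ) :
    ‖cexp (2 * π * I * τ)‖ = rexp (-π * τ.im) ^ 2 := by
  rw [Complex.norm_exp, ← Real.exp_nat_mul]
  congr 1
  simp [Complex.mul_re]
  ring

theorem exp_four_pi_sqrt_mul_pow_le {y : ℝ} (hy : 4 ≤ y) (n : ℕ) :
    rexp (4 * π * √n) * (rexp (-π * y) ^ 2) ^ n ≤ rexp (-π * y) ^ n := by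
  rw [← pow_mul, ← Real.exp_nat_mul, ← Real.exp_nat_mul, ← Real.exp_add, Real.exp_le_exp]
  have hsqrt : √(n : ℝ) ≤ n := Real.sqrt_le_self_iff.2 (by rcases n with _ | n <;> simp)
  have hyn : 4 * (n : ℝ) ≤ y * n := by gcongr
  push_cast
  nlinarith [Real.pi_pos]

theorem mul_exp_neg_pi_mul_le_one {y : ℝ} (hy : 4 ≤ y) : 745 * rexp (-π * y) ≤ 1 := by
  have h12 : (745 : ℝ) ≤ rexp 12 := by
    calc (745 : ℝ) ≤ 2 ^ 12 := by norm_num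
      _ ≤ rexp 1 ^ 12 := by gcongr; linarith [Real.exp_one_gt_d9]
      _ = rexp 12 := by rw [← Real.exp_nat_mul]; norm_num
  have hle : rexp (-π * y) ≤ rexp (-12) := by
    rw [Real.exp_le_exp]; nlinarith [Real.pi_gt_three]
  calc 745 * rexp (-π * y) ≤ rexp 12 * rexp (-12) := by gcongr
    _ = 1 := by rw [← Real.exp_add]; norm_num

theorem inv_sq_add_geom_mul_sq_le {r : ℝ} (hr0 : 0 < r) (hr : 745 * r ≤ 1) :
    ((r ^ 2)⁻¹ + 744 * (1 - r)⁻¹) * r ^ 2 ≤ 1 + r := by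
  have h1r : 0 < 1 - r := by linarith
  rw [add_mul, inv_mul_cancel₀ (by positivity), add_le_add_iff_left, mul_comm, ← mul_assoc,
    ← div_eq_mul_inv, div_le_iff₀ h1r]
  nlinarith

theorem coeff_le_mul_exp_four_pi_sqrt {c : ℕ → ℤ} (hc0 : c 0 = 744)
    (hcub : ∀ n : ℕ, 1 ≤ n → (c n : ℝ) < rexp (4 * π * √n)) (n : ℕ) :
    (c n : ℝ) ≤ 744 * rexp (4 * π * √n) := by
  rcases Nat.eq_zero_or_pos n with rfl | hn
  · simp [hc0]
  · linarith [hcub n hn, Real.exp_pos (4 * π * √n)]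

theorem norm_coeff_mul_pow_le {c : ℕ → ℤ} (hc0 : c 0 = 744)
    (hcub : ∀ n : ℕ, 1 ≤ n → (c n : ℝ) < rexp (4 * π * √n)) (hcnonneg : ∀ n, 0 ≤ c n)
    {y : ℝ} (hy : 4 ≤ y) {q : ℂ} (hq : ‖q‖ = rexp (-π * y) ^ 2) (n : ℕ) :
    ‖(c n : ℂ) * q ^ n‖ ≤ 744 * rexp (-π * y) ^ n := by
  rw [norm_mul, norm_pow, hq, Complex.norm_intCast, abs_of_nonneg (by exact_mod_cast hcnonneg n)]
  calc (c n : ℝ) * (rexp (-π * y) ^ 2) ^ n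
      ≤ 744 * rexp (4 * π * √n) * (rexp (-π * y) ^ 2) ^ n := by
        gcongr; exact coeff_le_mul_exp_four_pi_sqrt hc0 hcub n
    _ ≤ 744 * rexp (-π * y) ^ n := by
        rw [mul_assoc]; gcongr; exact exp_four_pi_sqrt_mul_pow_le hy n

/-- If `j` has `q`-expansion `j(τ) = 1/q + ∑ c(n) qⁿ` with integer coefficients satisfying
`c(0) = 744` and `0 ≤ c(n) < e^{4π√n}` for `n ≥ 1`, then for every `τ = x + iy` with `y ≥ 4`,
`|j(τ)|·e^{-2πy} ≤ 1 + (1 + 1/(πy))·e^{-πy}`. -/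
theorem j_abs_bound (j : ℂ → ℂ) (c : ℕ → ℤ)
    (hq : ∀ τ : ℂ, 0 < τ.im →
      j τ = 1 / Complex.exp (2 * π * I * τ) +
        ∑' n : ℕ, (c n : ℂ) * Complex.exp (2 * π * I * τ) ^ n)
    (hc0 : c 0 = 744)
    (hcnonneg : ∀ n, 0 ≤ c n)
    (hcub : ∀ n : ℕ, 1 ≤ n → (c n : ℝ) < Real.exp (4 * π * Real.sqrt n))
    (τ : ℂ) (hy : 4 ≤ τ.im) :
    ‖j τ‖ * Real.exp (-2 * π * τ.im) ≤
      1 + (1 + 1 / (π * τ.im)) * Real.exp (-π * τ.im) := by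
  set r := rexp (-π * τ.im)
  have hr0 : 0 < r := Real.exp_pos _
  have hr : 745 * r ≤ 1 := mul_exp_neg_pi_mul_le_one hy
  have hqr := norm_cexp_two_pi_I_mul τ
  have hseries : ‖∑' n : ℕ, (c n : ℂ) * cexp (2 * π * I * τ) ^ n‖ ≤ 744 * (1 - r)⁻¹ :=
    tsum_of_norm_bounded ((hasSum_geometric_of_lt_one hr0.le (by linarith)).mul_left 744)
      (norm_coeff_mul_pow_le hc0 hcub hcnonneg hy hqr)
  have hj : ‖j τ‖ ≤ (r ^ 2)⁻¹ + 744 * (1 - r)⁻¹ := by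
    rw [hq τ (by linarith), one_div]
    exact (norm_add_le _ _).trans (by rw [norm_inv, hqr]; gcongr)
  have hexp : rexp (-2 * π * τ.im) = r ^ 2 := by
    rw [← Real.exp_nat_mul]; ring_nf
  have hπy : 0 ≤ 1 / (π * τ.im) := by have := Real.pi_pos; positivity
  calc ‖j τ‖ * rexp (-2 * π * τ.im) ≤ ((r ^ 2)⁻¹ + 744 * (1 - r)⁻¹) * r ^ 2 := by
        rw [hexp]; gcongr
    _ ≤ 1 + r := inv_sq_add_geom_mul_sq_le hr0 hr
    _ ≤ 1 + (1 + 1 / (π * τ.im)) * r := by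
        gcongr; exact le_mul_of_one_le_left hr0.le (by linarith)
end

section
/- ∫ from π/3 to 2π/3 of log(sin θ) dθ = -(π/3)·log 2 + Σ_{n≥1} sin(2πn/3)/n². -/
/-!
For `|r| < 1`, taking real parts in `-log (1 - z) = ∑ zⁿ / n` at `z = r e^{2iθ}` gives
`log ‖1 - r e^{2iθ}‖ = -∑ rⁿ cos (2nθ) / n`, and integrating termwise over `[a, b]` gives
`(Im Li₂(r e^{2ia}) - Im Li₂(r e^{2ib})) / 2`. On `[π/4, 3π/4]` we have `cos 2θ ≤ 0`, hence
`1 ≤ ‖1 - r e^{2iθ}‖ ≤ 2` for `0 ≤ r ≤ 1`, so dominated convergence lets `r → 1⁻` on the integral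
side, while the dilogarithm series converges uniformly for `|r| ≤ 1`. At `r = 1`,
`‖1 - e^{2iθ}‖ = 2 sin θ`; for `[a, b] = [π/3, 2π/3]` the two boundary terms coincide up to sign,
since `sin (n (2π - φ)) = -sin (n φ)`.
-/

open Real Filter MeasureTheory Topology Set
open Complex (I exp)

lemma sq_norm_one_sub_ofReal_mul_exp (r φ : ℝ) :
    ‖1 - r * exp (φ * I)‖ ^ 2 = 1 - 2 * r * cos φ + r ^ 2 := by
  rw [Complex.sq_norm, Complex.normSq_apply]
  simp only [Complex.sub_re, Complex.sub_im, Complex.one_re, Complex.one_im, Complex.re_ofReal_mul,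
    Complex.im_ofReal_mul, Complex.exp_ofReal_mul_I_re, Complex.exp_ofReal_mul_I_im]
  nlinarith [sin_sq_add_cos_sq φ]

lemma one_le_norm_one_sub_ofReal_mul_exp {r φ : ℝ} (hr : 0 ≤ r) (hφ : cos φ ≤ 0) :
    1 ≤ ‖1 - r * exp (φ * I)‖ := by
  refine one_le_sq_iff_one_le_abs _ |>.mp ?_ |>.trans_eq (abs_norm _)
  rw [sq_norm_one_sub_ofReal_mul_exp]
  nlinarith

lemma norm_one_sub_ofReal_mul_exp_le {r : ℝ} (hr : |r| ≤ 1) (φ : ℝ) :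
    ‖1 - r * exp (φ * I)‖ ≤ 2 :=
  calc ‖1 - r * exp (φ * I)‖ ≤ ‖(1 : ℂ)‖ + ‖r * exp (φ * I)‖ := norm_sub_le _ _
    _ ≤ 2 := by simp only [norm_one, norm_mul, Complex.norm_exp_ofReal_mul_I, Complex.norm_real,
      Real.norm_eq_abs, mul_one]; linarith

lemma norm_one_sub_exp_two_mul (θ : ℝ) : ‖1 - exp (↑(2 * θ) * I)‖ = 2 * |sin θ| := by
  have h := sq_norm_one_sub_ofReal_mul_exp 1 (2 * θ)
  rw [Complex.ofReal_one, one_mul, cos_two_mul, cos_sq'] at h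
  rw [← sq_eq_sq₀ (norm_nonneg _) (by positivity), h, mul_pow, sq_abs]
  ring

lemma hasSum_log_norm_one_sub_ofReal_mul_exp {r : ℝ} (hr : |r| < 1) (φ : ℝ) :
    HasSum (fun n : ℕ ↦ -(r ^ (n + 1) * cos ((n + 1) * φ) / (n + 1)))
      (log ‖1 - r * exp (φ * I)‖) := by
  have hz : ‖(r * exp (φ * I) : ℂ)‖ < 1 := by
    simpa [Complex.norm_exp_ofReal_mul_I] using hr
  have h := (Complex.hasSum_re (Complex.hasSum_taylorSeries_neg_log' hz)).neg
  rw [Complex.neg_re, Complex.log_re, neg_neg] at h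
  refine h.congr_fun fun n ↦ ?_
  rw [neg_inj, mul_pow, ← Complex.exp_nat_mul, ← Complex.ofReal_pow]
  norm_cast
  rw [Complex.div_natCast_re, Complex.re_ofReal_mul, ← mul_assoc, ← Complex.ofReal_natCast,
    ← Complex.ofReal_mul, Complex.exp_ofReal_mul_I_re]

lemma integral_cos_const_mul {c : ℝ} (hc : c ≠ 0) (a b : ℝ) :
    ∫ x in a..b, cos (c * x) = (sin (c * b) - sin (c * a)) / c := by
  rw [intervalIntegral.integral_comp_mul_left (fun x ↦ cos x) hc, integral_cos, smul_eq_mul,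
    inv_mul_eq_div]

lemma hasSum_integral_log_norm_one_sub_ofReal_mul_exp {r : ℝ} (hr : |r| < 1) (a b : ℝ) :
    HasSum (fun n : ℕ ↦ (r ^ (n + 1) * sin ((n + 1) * (2 * a)) / (n + 1) ^ 2
        - r ^ (n + 1) * sin ((n + 1) * (2 * b)) / (n + 1) ^ 2) / 2)
      (∫ θ in a..b, log ‖1 - r * exp (↑(2 * θ) * I)‖) := by
  have hbound (n : ℕ) (θ : ℝ) :
      ‖-(r ^ (n + 1) * cos ((n + 1) * (2 * θ)) / (n + 1))‖ ≤ |r| ^ (n + 1) := by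
    rw [norm_neg, norm_div, norm_mul, norm_pow, Real.norm_eq_abs, Real.norm_eq_abs,
      Real.norm_of_nonneg (by positivity)]
    calc |r| ^ (n + 1) * |cos ((n + 1) * (2 * θ))| / (n + 1) ≤ |r| ^ (n + 1) * 1 / 1 := by
          gcongr
          · exact abs_cos_le_one _
          · linarith [n.cast_nonneg (α := ℝ)]
      _ = |r| ^ (n + 1) := by ring
  have h := intervalIntegral.hasSum_integral_of_dominated_convergence (μ := volume) (a := a)
    (b := b) (fun n _ ↦ |r| ^ (n + 1)) (fun n ↦ by fun_prop)
    (fun n ↦ ae_of_all _ fun θ _ ↦ hbound n θ)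
    (ae_of_all _ fun _ _ ↦ (summable_geometric_of_lt_one (abs_nonneg r) hr).mul_left |r|
      |>.congr fun n ↦ (pow_succ' _ _).symm)
    intervalIntegrable_const
    (ae_of_all _ fun θ _ ↦ hasSum_log_norm_one_sub_ofReal_mul_exp hr (2 * θ))
  refine h.congr_fun fun n ↦ ?_
  have hn : (n + 1 : ℝ) ≠ 0 := by positivity
  simp_rw [← mul_assoc]
  rw [intervalIntegral.integral_neg, intervalIntegral.integral_div,
    intervalIntegral.integral_const_mul, integral_cos_const_mul (by positivity)]
  field_simp
  ring_nf

/-- `imDilog r φ = Im Li₂(r e^{iφ}) = ∑_{n ≥ 1} rⁿ sin(nφ) / n²`. -/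
noncomputable def imDilog (r φ : ℝ) : ℝ :=
  ∑' n : ℕ, r ^ (n + 1) * sin ((n + 1) * φ) / (n + 1) ^ 2

lemma summable_one_div_succ_sq : Summable fun n : ℕ ↦ 1 / ((n : ℝ) + 1) ^ 2 := by
  exact_mod_cast (summable_nat_add_iff 1).mpr (Real.summable_one_div_nat_pow.mpr one_lt_two)

lemma norm_pow_succ_mul_sin_div_le {r : ℝ} (hr : |r| ≤ 1) (φ : ℝ) (n : ℕ) :
    ‖r ^ (n + 1) * sin ((n + 1) * φ) / (n + 1) ^ 2‖ ≤ 1 / ((n : ℝ) + 1) ^ 2 := by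
  rw [norm_div, norm_mul, norm_pow, Real.norm_eq_abs, Real.norm_eq_abs,
    Real.norm_of_nonneg (by positivity)]
  gcongr
  calc |r| ^ (n + 1) * |sin ((n + 1) * φ)| ≤ 1 ^ (n + 1) * 1 := by
        gcongr; exact abs_sin_le_one _
    _ = 1 := by ring

lemma summable_imDilog {r : ℝ} (hr : |r| ≤ 1) (φ : ℝ) :
    Summable fun n : ℕ ↦ r ^ (n + 1) * sin ((n + 1) * φ) / (n + 1) ^ 2 :=
  summable_one_div_succ_sq.of_norm_bounded (norm_pow_succ_mul_sin_div_le hr φ)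

lemma continuousOn_imDilog (φ : ℝ) : ContinuousOn (fun r ↦ imDilog r φ) (Icc (-1) 1) :=
  continuousOn_tsum (fun n ↦ by fun_prop) summable_one_div_succ_sq
    fun n _ hr ↦ norm_pow_succ_mul_sin_div_le (abs_le.mpr hr) φ n

lemma imDilog_two_pi_sub (r φ : ℝ) : imDilog r (2 * π - φ) = -imDilog r φ := by
  rw [imDilog, imDilog, ← tsum_neg]
  congr 1 with n
  have h : ((n : ℝ) + 1) * (2 * π - φ) = ((n + 1 : ℕ) : ℝ) * (2 * π) - (n + 1) * φ := by
    push_cast; ring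
  rw [h, sin_nat_mul_two_pi_sub]
  ring

lemma integral_log_norm_one_sub_ofReal_mul_exp {r : ℝ} (hr : |r| < 1) (a b : ℝ) :
    ∫ θ in a..b, log ‖1 - r * exp (↑(2 * θ) * I)‖ = (imDilog r (2 * a) - imDilog r (2 * b)) / 2 :=
  (hasSum_integral_log_norm_one_sub_ofReal_mul_exp hr a b).unique
    (((summable_imDilog hr.le _).hasSum.sub (summable_imDilog hr.le _).hasSum).div_const 2)

lemma continuousOn_integral_log_norm_one_sub_ofReal_mul_exp {a b : ℝ}
    (hcos : ∀ θ ∈ uIoc a b, cos (2 * θ) ≤ 0) :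
    ContinuousOn (fun r : ℝ ↦ ∫ θ in a..b, log ‖1 - r * exp (↑(2 * θ) * I)‖) (Icc 0 1) := by
  intro r₀ hr₀
  refine intervalIntegral.continuousWithinAt_of_dominated_interval (bound := fun _ ↦ log 2)
    (.of_forall fun r ↦ (Measurable.log (by fun_prop)).aestronglyMeasurable) ?_
    intervalIntegrable_const (ae_of_all _ fun θ hθ ↦ ?_)
  · filter_upwards [self_mem_nhdsWithin] with r hr
    refine ae_of_all _ fun θ hθ ↦ ?_
    have hlow := one_le_norm_one_sub_ofReal_mul_exp hr.1 (hcos θ hθ)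
    rw [Real.norm_of_nonneg (log_nonneg hlow)]
    exact log_le_log (by linarith)
      (norm_one_sub_ofReal_mul_exp_le (abs_le.mpr ⟨by linarith [hr.1], hr.2⟩) _)
  · refine ContinuousOn.log (by fun_prop) (fun r hr ↦ ?_) r₀ hr₀
    exact (zero_lt_one.trans_le (one_le_norm_one_sub_ofReal_mul_exp hr.1 (hcos θ hθ))).ne'

lemma cos_two_mul_nonpos {θ : ℝ} (hθ : θ ∈ Icc (π / 4) (3 * π / 4)) : cos (2 * θ) ≤ 0 :=
  cos_nonpos_of_pi_div_two_le_of_le (by linarith [hθ.1]) (by linarith [hθ.2, pi_pos])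

lemma integral_log_norm_one_sub_exp {a b : ℝ} (ha : a ∈ Icc (π / 4) (3 * π / 4))
    (hb : b ∈ Icc (π / 4) (3 * π / 4)) :
    ∫ θ in a..b, log ‖1 - exp (↑(2 * θ) * I)‖ = (imDilog 1 (2 * a) - imDilog 1 (2 * b)) / 2 := by
  have hcos : ∀ θ ∈ uIoc a b, cos (2 * θ) ≤ 0 :=
    fun θ hθ ↦ cos_two_mul_nonpos (uIcc_subset_Icc ha hb (uIoc_subset_uIcc hθ))
  have hdilog : ContinuousOn (fun r ↦ (imDilog r (2 * a) - imDilog r (2 * b)) / 2) (Icc 0 1) :=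
    (((continuousOn_imDilog _).sub (continuousOn_imDilog _)).div_const 2).mono
      (Icc_subset_Icc_left (by norm_num))
  have hEq : EqOn (fun r : ℝ ↦ ∫ θ in a..b, log ‖1 - r * exp (↑(2 * θ) * I)‖)
      (fun r ↦ (imDilog r (2 * a) - imDilog r (2 * b)) / 2) (Ico 0 1) :=
    fun r hr ↦ integral_log_norm_one_sub_ofReal_mul_exp (abs_lt.mpr ⟨by linarith [hr.1], hr.2⟩) a b
  simpa using hEq.of_subset_closure (continuousOn_integral_log_norm_one_sub_ofReal_mul_exp hcos)
    hdilog Ico_subset_Icc_self (closure_Ico zero_ne_one).ge (right_mem_Icc.mpr zero_le_one)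

lemma integral_log_sin_eq_imDilog {a b : ℝ} (ha : a ∈ Icc (π / 4) (3 * π / 4))
    (hb : b ∈ Icc (π / 4) (3 * π / 4)) :
    ∫ θ in a..b, log (sin θ) = -(b - a) * log 2 + (imDilog 1 (2 * a) - imDilog 1 (2 * b)) / 2 := by
  have hsplit : ∫ θ in a..b, log ‖1 - exp (↑(2 * θ) * I)‖ = ∫ θ in a..b, (log 2 + log (sin θ)) := by
    refine intervalIntegral.integral_congr fun θ hθ ↦ ?_
    have hθ' := uIcc_subset_Icc ha hb hθ
    have hsin : 0 < sin θ := sin_pos_of_pos_of_lt_pi (by linarith [hθ'.1, pi_pos])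
      (by linarith [hθ'.2, pi_pos])
    rw [norm_one_sub_exp_two_mul, abs_of_pos hsin, log_mul two_ne_zero hsin.ne']
  rw [intervalIntegral.integral_add intervalIntegrable_const (by exact intervalIntegrable_log_sin),
    intervalIntegral.integral_const, smul_eq_mul, integral_log_norm_one_sub_exp ha hb] at hsplit
  linarith

/-- `∫_{π/3}^{2π/3} log(sin θ) dθ = -(π/3) log 2 + ∑_{n≥1} sin(2πn/3)/n²`. -/
theorem integral_log_sin :
    ∫ θ in (π / 3)..(2 * π / 3), Real.log (Real.sin θ) =
      -(π / 3) * Real.log 2 + ∑' n : ℕ, Real.sin (2 * π * (n + 1) / 3) / (n + 1) ^ 2 := by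
  have h := integral_log_sin_eq_imDilog (a := π / 3) (b := 2 * π / 3)
    ⟨by linarith [pi_pos], by linarith [pi_pos]⟩ ⟨by linarith [pi_pos], by linarith [pi_pos]⟩
  have hreflect : 2 * (2 * π / 3) = 2 * π - 2 * (π / 3) := by ring
  have hseries : imDilog 1 (2 * (π / 3)) = ∑' n : ℕ, sin (2 * π * (n + 1) / 3) / (n + 1) ^ 2 := by
    simp only [imDilog, one_pow, one_mul]
    congr 1 with n
    ring_nf
  rw [h, hreflect, imDilog_two_pi_sub, hseries]
  ring
end
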